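/- arXiv:2303.09582 — 6 statements merged into one kernel-verified Lean document; each statement's English description precedes it below -/
import Mathlib

section
/- For all positive integers n and d, every exponent vector a : Fin (n+1) → ℕ with ∑ i, a i = 2d can be written as a = b + c where b, c : Fin (n+1) → ℕ satisfy ∑ i, b i = d, ∑ i, c i = d, |supp(b)| ≤ ⌈(n+2)/2⌉ and |supp(c)| ≤ ⌈(n+2)/2⌉. Consequently, any Ω ⊆ M_{n,d} containing all exponent vectors of degree d with support of size at most ⌈(n+2)/2⌉ spans a 2-normal space: every exponent vector of degree 2d is a sum of two elements of Ω. -/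
open MvPolynomial

/-- The size of the support of an exponent vector. -/
def suppCard {n : ℕ} (a : Fin (n + 1) → ℕ) : ℕ :=
  (Finset.univ.filter fun i => a i ≠ 0).card

/-- The toric ideal of a set `Ω` of exponent vectors: the kernel of the `K`-algebra map
sending the variable `w_a` (for `a ∈ Ω`) to the monomial with exponent vector `a`. -/
noncomputable def toricIdeal (K : Type*) [Field K] {n : ℕ}
    (Ω : Set (Fin (n + 1) → ℕ)) : Ideal (MvPolynomial Ω K) :=
  RingHom.ker
    (aeval (R := K) fun a : Ω => ∏ i, (X i : MvPolynomial (Fin (n + 1)) K) ^ (a.1 i))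

/-- `I(Ω)` is generated in degrees at most `k` (each variable `w_a` having degree 1). -/
def genInDegLE (K : Type*) [Field K] {n : ℕ} (Ω : Set (Fin (n + 1) → ℕ)) (k : ℕ) : Prop :=
  toricIdeal K Ω =
    Ideal.span {p : MvPolynomial Ω K | p ∈ toricIdeal K Ω ∧ ∃ m ≤ k, p.IsHomogeneous m}

/-- `I(Ω)` is generated by quadrics: it equals the ideal generated by its homogeneous
elements of degree 2. -/
def genByQuadrics (K : Type*) [Field K] {n : ℕ} (Ω : Set (Fin (n + 1) → ℕ)) : Prop :=
  toricIdeal K Ω =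
    Ideal.span {p : MvPolynomial Ω K | p ∈ toricIdeal K Ω ∧ p.IsHomogeneous 2}

/-!
Peel off a largest coordinate `a i` and swap the two parts of a split of the rest: by induction this
gives `a = b + c` with `∑ c ≤ ∑ b ≤ ∑ c + b i` for some `i`, where `b` and `c` are supported on
`⌈k/2⌉` and `⌊k/2⌋` of the `k` coordinates of `supp a`. When `∑ a = 2d`, moving the excess
`(∑ b - ∑ c) / 2 ≤ b i` from `b i` to `c i` makes both parts of degree `d` and enlarges the support of
`c` by at most one; finally `k ≤ n + 1`.
-/

open Finset

section SupportSplit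

variable {ι : Type*} [Fintype ι] [DecidableEq ι]

omit [DecidableEq ι] in
lemma card_support_le_of_le {f g : ι → ℕ} (hfg : f ≤ g) :
    #{i | f i ≠ 0} ≤ #{i | g i ≠ 0} :=
  card_le_card <| monotone_filter_right _ fun i _ hf => by
    have : f i ≤ g i := hfg i
    omega

lemma card_support_add_single_le (f : ι → ℕ) (i : ι) (x : ℕ) :
    #{j | (f + Pi.single i x : ι → ℕ) j ≠ 0} ≤ #{j | f j ≠ 0} + 1 := by
  refine (card_le_card fun j hj => ?_).trans (card_insert_le i _)
  by_cases hji : j = i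
  · simp [hji]
  · simp_all

lemma sum_add_pi_single (f : ι → ℕ) (i : ι) (x : ℕ) :
    ∑ j, (f + Pi.single i x : ι → ℕ) j = ∑ j, f j + x := by
  simp [sum_add_distrib]

lemma exists_balanced_split [Nonempty ι] (a : ι → ℕ) :
    ∃ b c : ι → ℕ, a = b + c ∧ ∑ j, c j ≤ ∑ j, b j ∧ (∃ i, ∑ j, b j ≤ ∑ j, c j + b i) ∧
      #{j | b j ≠ 0} ≤ (#{j | a j ≠ 0} + 1) / 2 ∧ #{j | c j ≠ 0} ≤ #{j | a j ≠ 0} / 2 := by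
  induction hk : #{j | a j ≠ 0} generalizing a with
  | zero =>
    have ha : ∀ j, a j = 0 := by simpa using card_eq_zero.mp hk
    exact ⟨0, 0, by ext j; simp [ha], le_rfl, ⟨Classical.arbitrary ι, by simp⟩, by simp, by simp⟩
  | succ k ih =>
    obtain ⟨i, hi, hmax⟩ := exists_max_image ({j | a j ≠ 0} : Finset ι) a
      (card_pos.mp (by omega))
    have hmax' : ∀ j, a j ≤ a i := fun j => by
      by_cases hj : a j = 0
      · omega
      · exact hmax j (by simpa using hj)
    set a' := Function.update a i 0
    have ha : a = a' + Pi.single i (a i) := funext fun j => by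
      by_cases hji : j = i <;> simp [a', hji]
    have hk' : #{j | a' j ≠ 0} = k := by
      have : ({j | a' j ≠ 0} : Finset ι) = ({j | a j ≠ 0} : Finset ι).erase i := by
        ext j; by_cases hji : j = i <;> simp [a', hji]
      rw [this, card_erase_of_mem hi, hk, Nat.add_sub_cancel]
    obtain ⟨b, c, ha', hcb, ⟨i', hbc⟩, hb, hc⟩ := ih a' hk'
    have hbi' : b i' ≤ a i := by
      have hsplit : a' i' = b i' + c i' := by rw [ha']; rfl
      have hle : a' i' ≤ a i' := by by_cases hi' : i' = i <;> simp [a', hi']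
      have := hmax' i'
      omega
    refine ⟨c + Pi.single i (a i), b, ?_, ?_, ⟨i, ?_⟩, ?_, ?_⟩
    · exact ha.trans (by rw [ha']; abel)
    · rw [sum_add_pi_single]
      omega
    · rw [sum_add_pi_single]
      simp only [Pi.add_apply, Pi.single_eq_same]
      omega
    · exact (card_support_add_single_le c i _).trans (by omega)
    · exact hb.trans (by omega)

lemma exists_split_of_sum_eq_two_mul [Nonempty ι] (a : ι → ℕ) (d : ℕ) (ha : ∑ j, a j = 2 * d) :
    ∃ b c : ι → ℕ, a = b + c ∧ ∑ j, b j = d ∧ ∑ j, c j = d ∧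
      #{j | b j ≠ 0} ≤ (#{j | a j ≠ 0} + 2) / 2 ∧ #{j | c j ≠ 0} ≤ (#{j | a j ≠ 0} + 2) / 2 := by
  obtain ⟨b, c, hbc, hcb, ⟨i, hbi⟩, hb, hc⟩ := exists_balanced_split a
  have hsum : ∑ j, b j + ∑ j, c j = 2 * d := by rw [← ha, hbc, ← sum_add_distrib]; rfl
  set e := ∑ j, b j - d
  set b' := Function.update b i (b i - e)
  have hb' : b = b' + Pi.single i e := funext fun j => by
    by_cases hji : j = i
    · subst hji
      simp only [b', Pi.add_apply, Function.update_self, Pi.single_eq_same]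
      omega
    · simp [b', hji]
  refine ⟨b', c + Pi.single i e, ?_, ?_, ?_, ?_, ?_⟩
  · rw [hbc, hb']
    abel
  · have := congrArg (fun f => ∑ j, f j) hb'
    simp only [sum_add_pi_single] at this
    omega
  · rw [sum_add_pi_single]
    omega
  · have hle : b' ≤ b := fun j => by by_cases hji : j = i <;> simp [b', hji]
    exact (card_support_le_of_le hle).trans (hb.trans (by omega))
  · exact (card_support_add_single_le c i e).trans (by omega)

end SupportSplit

lemma exists_split_suppCard_le (n d : ℕ) (a : Fin (n + 1) → ℕ) (ha : ∑ i, a i = 2 * d) :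
    ∃ b c : Fin (n + 1) → ℕ, a = b + c ∧ (∑ i, b i = d) ∧ (∑ i, c i = d) ∧
      suppCard b ≤ (n + 3) / 2 ∧ suppCard c ≤ (n + 3) / 2 := by
  obtain ⟨b, c, hbc, hb, hc, hsb, hsc⟩ := exists_split_of_sum_eq_two_mul a d ha
  have hsa : #{i | a i ≠ 0} ≤ n + 1 := (card_le_univ _).trans_eq (Fintype.card_fin _)
  exact ⟨b, c, hbc, hb, hc, hsb.trans (by omega), hsc.trans (by omega)⟩

theorem stmt1_general (n d : ℕ) :
    (∀ a : Fin (n + 1) → ℕ, ∑ i, a i = 2 * d →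
      ∃ b c : Fin (n + 1) → ℕ, a = b + c ∧ (∑ i, b i = d) ∧ (∑ i, c i = d) ∧
        suppCard b ≤ (n + 3) / 2 ∧ suppCard c ≤ (n + 3) / 2) ∧
    (∀ Ω : Set (Fin (n + 1) → ℕ),
      {a : Fin (n + 1) → ℕ | (∑ i, a i = d) ∧ suppCard a ≤ (n + 3) / 2} ⊆ Ω →
      ∀ a : Fin (n + 1) → ℕ, ∑ i, a i = 2 * d → ∃ b ∈ Ω, ∃ c ∈ Ω, a = b + c) := by
  refine ⟨exists_split_suppCard_le n d, fun Ω hΩ a ha => ?_⟩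
  obtain ⟨b, c, hbc, hb, hc, hsb, hsc⟩ := exists_split_suppCard_le n d a ha
  exact ⟨b, hΩ ⟨hb, hsb⟩, c, hΩ ⟨hc, hsc⟩, hbc⟩

/-- every exponent vector of degree `2d` splits as a sum of two exponent
vectors of degree `d` each supported in at most `⌈(n+2)/2⌉ = (n+3)/2` variables; hence any
`Ω ⊆ M_{n,d}` containing all such vectors spans a 2-normal space. -/
theorem stmt1 (n d : ℕ) (hn : 1 ≤ n) (hd : 1 ≤ d) :
    (∀ a : Fin (n + 1) → ℕ, ∑ i, a i = 2 * d →
      ∃ b c : Fin (n + 1) → ℕ, a = b + c ∧ (∑ i, b i = d) ∧ (∑ i, c i = d) ∧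
        suppCard b ≤ (n + 3) / 2 ∧ suppCard c ≤ (n + 3) / 2) ∧
    (∀ Ω : Set (Fin (n + 1) → ℕ),
      {a : Fin (n + 1) → ℕ | (∑ i, a i = d) ∧ suppCard a ≤ (n + 3) / 2} ⊆ Ω →
      ∀ a : Fin (n + 1) → ℕ, ∑ i, a i = 2 * d → ∃ b ∈ Ω, ∃ c ∈ Ω, a = b + c) :=
  stmt1_general n d
end

section
/- Let n, d be positive integers and Ω ⊆ M_{n,d} a set of exponent vectors such that every exponent vector a : Fin (n+1) → ℕ with ∑ i, a i = 2d is a sum of two elements of Ω (i.e. Ω spans a 2-normal space). Then for every integer t ≥ 2, every exponent vector a with ∑ i, a i = t·d is a sum of t elements of Ω (equivalently, the degree-t graded component of the monomial algebra K[Ω] equals the full space of forms of degree t·d, so the Hilbert function equals C(n + t·d, n) for all t ≥ 2). -/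
open MvPolynomial

/-! Any vector of degree at least `2d` dominates a sub-vector of degree exactly `2d`, which
splits into two elements of `Ω`; so some `b ∈ Ω` lies below it. Subtracting `b` lowers the
degree by `d`, and induction on `t` peels off one element of `Ω` at a time. -/

lemma exists_le_sum_eq {ι : Type*} [Fintype ι] (a : ι → ℕ) {m : ℕ} (hm : m ≤ ∑ i, a i) :
    ∃ c ≤ a, ∑ i, c i = m := by
  classical
  induction m with
  | zero => exact ⟨0, fun _ => Nat.zero_le _, by simp⟩
  | succ m ih =>
    obtain ⟨c, hca, hc⟩ := ih (by omega)
    obtain ⟨i, hi⟩ : ∃ i, c i < a i := by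
      by_contra! h
      have : ∑ i, a i ≤ ∑ i, c i := Finset.sum_le_sum fun i _ => h i
      omega
    refine ⟨c + Pi.single i 1, fun j => ?_, ?_⟩
    · rcases eq_or_ne j i with rfl | hj
      · simpa using hi
      · simpa [hj] using hca j
    · simp [Finset.sum_add_distrib, hc]

section TwoNormal

variable {ι : Type*} [Fintype ι] {d : ℕ} {Ω : Set (ι → ℕ)}

lemma exists_mem_le_of_two_mul_le_sum
    (h2 : ∀ a : ι → ℕ, ∑ i, a i = 2 * d → ∃ b ∈ Ω, ∃ c ∈ Ω, a = b + c)
    {a : ι → ℕ} (ha : 2 * d ≤ ∑ i, a i) : ∃ b ∈ Ω, b ≤ a := by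
  obtain ⟨c, hca, hc⟩ := exists_le_sum_eq a ha
  obtain ⟨b, hb, b', -, rfl⟩ := h2 c hc
  exact ⟨b, hb, le_trans le_self_add hca⟩

theorem exists_sum_mem_of_sum_eq_mul
    (hΩ : Ω ⊆ {a | ∑ i, a i = d})
    (h2 : ∀ a : ι → ℕ, ∑ i, a i = 2 * d → ∃ b ∈ Ω, ∃ c ∈ Ω, a = b + c)
    {t : ℕ} (ht : 2 ≤ t) {a : ι → ℕ} (ha : ∑ i, a i = t * d) :
    ∃ f : Fin t → ι → ℕ, (∀ j, f j ∈ Ω) ∧ a = ∑ j, f j := by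
  induction t, ht using Nat.le_induction generalizing a with
  | base =>
    obtain ⟨b, hb, c, hc, rfl⟩ := h2 a ha
    exact ⟨![b, c], Fin.forall_fin_two.2 ⟨hb, hc⟩, by simp⟩
  | succ t ht ih =>
    obtain ⟨b, hb, hba⟩ := exists_mem_le_of_two_mul_le_sum h2
      (a := a) (by rw [ha]; exact Nat.mul_le_mul_right d (by omega))
    have hsub : ∑ i, (a - b) i = t * d := by
      simp only [Pi.sub_apply]
      rw [Finset.sum_tsub_distrib _ fun i _ => hba i, ha, hΩ hb, add_mul, one_mul,
        Nat.add_sub_cancel]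
    obtain ⟨g, hg, hga⟩ := ih hsub
    refine ⟨Fin.cons b g, Fin.forall_fin_succ.2 ⟨by simpa using hb, by simpa using hg⟩, ?_⟩
    rw [Fin.sum_cons, ← hga, add_tsub_cancel_of_le hba]

end TwoNormal

theorem stmt3_general (n d : ℕ)
    (Ω : Set (Fin (n + 1) → ℕ)) (hΩsub : Ω ⊆ {a | ∑ i, a i = d})
    (h2 : ∀ a : Fin (n + 1) → ℕ, ∑ i, a i = 2 * d → ∃ b ∈ Ω, ∃ c ∈ Ω, a = b + c) :
    ∀ t : ℕ, 2 ≤ t → ∀ a : Fin (n + 1) → ℕ, ∑ i, a i = t * d →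
      ∃ f : Fin t → (Fin (n + 1) → ℕ), (∀ j, f j ∈ Ω) ∧ a = ∑ j, f j :=
  fun _ ht _ ha => exists_sum_mem_of_sum_eq_mul hΩsub h2 ht ha

/-- if `Ω ⊆ M_{n,d}` spans a 2-normal space (every exponent vector of degree
`2d` is a sum of two elements of `Ω`), then for every `t ≥ 2` every exponent vector of
degree `t·d` is a sum of `t` elements of `Ω`. -/
theorem stmt3 (n d : ℕ) (hn : 1 ≤ n) (hd : 1 ≤ d)
    (Ω : Set (Fin (n + 1) → ℕ)) (hΩsub : Ω ⊆ {a | ∑ i, a i = d})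
    (h2 : ∀ a : Fin (n + 1) → ℕ, ∑ i, a i = 2 * d → ∃ b ∈ Ω, ∃ c ∈ Ω, a = b + c) :
    ∀ t : ℕ, 2 ≤ t → ∀ a : Fin (n + 1) → ℕ, ∑ i, a i = t * d →
      ∃ f : Fin t → (Fin (n + 1) → ℕ), (∀ j, f j ∈ Ω) ∧ a = ∑ j, f j :=
  stmt3_general n d Ω hΩsub h2
end

section
/- Let Ω ⊆ M_{n,d} be a set of exponent vectors such that every exponent vector a : Fin (n+1) → ℕ with ∑ i, a i = 2d is a sum of two elements of Ω (i.e. Ω spans a 2-normal space). Then the toric ideal I(Ω) is generated in degrees ≤ 3, i.e. I(Ω) equals the ideal generated by its homogeneous elements of degree at most 3. -/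
open MvPolynomial

/-!
Monomials `∏_{a ∈ C} w_a` of `MvPolynomial Ω K` correspond to multisets `C` of elements of `Ω`,
and the toric map sends such a monomial to the monomial with exponent `∑_{a ∈ C} a`. A toric
ideal is spanned by the binomials of pairs of monomials with the same image, so it suffices to
connect any two multisets with equal sums by moves replacing at most three elements at a time:
each move contributes a cubic binomial of the ideal times a monomial.

The moves come from 2-normality. If `b ∈ Ω` lies below a sum `x + y + z` of elements of `Ω`, then
`x + y + z - b` has degree `2d`, hence is a sum `q + r` of elements of `Ω`: one move turns
`{x, y, z}` into `{b, q, r}`. Similarly, a vector `t` of degree at most `d` below `x + y + z` can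
be brought below `q + r` for some decomposition `x + y + z = p + q + r`, since `x + y + z - t`
has degree at least `2d` and thus lies above some `p ∈ Ω`. Peeling off the elements of a multiset
`C` one at a time, this gathers any `b ∈ Ω` below `∑ C` into three of its elements, so every
element of `C'` can be made to appear in `C`, and one concludes by induction on `C'`.
-/

section TwoNormal

variable {ι : Type*} [Fintype ι] {Ω : Set (ι → ℕ)} {d : ℕ}

theorem exists_le_sum_eq_s5 (w : ι → ℕ) {k : ℕ} (hk : k ≤ ∑ i, w i) :
    ∃ u ≤ w, ∑ i, u i = k := by
  classical
  induction k with
  | zero => exact ⟨0, fun _ => Nat.zero_le _, by simp⟩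
  | succ k ih =>
    obtain ⟨u, huw, hu⟩ := ih (by omega)
    obtain ⟨i, hi⟩ : ∃ i, u i < w i := by
      by_contra! h
      have := Finset.sum_le_sum fun i (_ : i ∈ Finset.univ) => h i
      omega
    refine ⟨u + Pi.single i 1, fun j => ?_, by simp [Finset.sum_add_distrib, hu]⟩
    rcases eq_or_ne j i with rfl | hj
    · simpa using hi
    · simpa [hj] using huw j

structure IsTwoNormal (Ω : Set (ι → ℕ)) (d : ℕ) : Prop where
  subset : Ω ⊆ {a | ∑ i, a i = d}
  exists_add_eq : ∀ v : ι → ℕ, ∑ i, v i = 2 * d → ∃ b ∈ Ω, ∃ c ∈ Ω, v = b + c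

theorem IsTwoNormal.sum_eq (hΩ : IsTwoNormal Ω d) (a : Ω) : ∑ i, (a : ι → ℕ) i = d :=
  hΩ.subset a.2

theorem IsTwoNormal.sum_add_add (hΩ : IsTwoNormal Ω d) (x y z : Ω) :
    ∑ i, (x + y + z : ι → ℕ) i = 3 * d := by
  simp only [Pi.add_apply, Finset.sum_add_distrib, hΩ.sum_eq]
  ring

theorem IsTwoNormal.exists_mem_le (hΩ : IsTwoNormal Ω d) {v : ι → ℕ} (hv : 2 * d ≤ ∑ i, v i) :
    ∃ p : Ω, (p : ι → ℕ) ≤ v := by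
  obtain ⟨u, huv, hu⟩ := exists_le_sum_eq_s5 v hv
  obtain ⟨b, hb, c, -, rfl⟩ := hΩ.exists_add_eq u hu
  exact ⟨⟨b, hb⟩, le_self_add.trans huv⟩

theorem IsTwoNormal.exists_add_add_eq (hΩ : IsTwoNormal Ω d) (x y z b : Ω)
    (hb : (b : ι → ℕ) ≤ x + y + z) : ∃ q r : Ω, (x + y + z : ι → ℕ) = b + q + r := by
  obtain ⟨q, hq, r, hr, hqr⟩ := hΩ.exists_add_eq (x + y + z - b) (by
    simp only [Pi.sub_apply]
    rw [Finset.sum_tsub_distrib _ fun i _ => hb i, hΩ.sum_add_add, hΩ.sum_eq]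
    omega)
  refine ⟨⟨q, hq⟩, ⟨r, hr⟩, funext fun i => ?_⟩
  have := congrFun hqr i
  have := hb i
  simp only [Pi.add_apply, Pi.sub_apply] at *
  omega

theorem IsTwoNormal.exists_add_add_eq_of_le (hΩ : IsTwoNormal Ω d) (x y z : Ω) {t : ι → ℕ}
    (ht : t ≤ x + y + z) (htd : ∑ i, t i ≤ d) :
    ∃ p q r : Ω, (x + y + z : ι → ℕ) = p + q + r ∧ t ≤ q + r := by
  obtain ⟨p, hp⟩ := hΩ.exists_mem_le (v := x + y + z - t) (by
    simp only [Pi.sub_apply]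
    rw [Finset.sum_tsub_distrib _ fun i _ => ht i, hΩ.sum_add_add]
    omega)
  obtain ⟨q, r, hpqr⟩ := hΩ.exists_add_add_eq x y z p (hp.trans tsub_le_self)
  refine ⟨p, q, r, hpqr, fun i => ?_⟩
  have := congrFun hpqr i
  have := hp i
  have := ht i
  simp only [Pi.add_apply, Pi.sub_apply] at *
  omega

end TwoNormal

section Moves

variable {ι : Type*} {Ω : Set (ι → ℕ)} {d k : ℕ}

open Multiset Relation

/-- The exponent vector of the image of the monomial `∏_{a ∈ C} w_a` under the toric map. -/
def msum (C : Multiset Ω) : ι → ℕ := (C.map (↑)).sum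

@[simp] theorem msum_zero : msum (0 : Multiset Ω) = 0 := rfl

@[simp] theorem msum_cons (a : Ω) (C : Multiset Ω) : msum (a ::ₘ C) = a + msum C := by
  simp [msum]

@[simp] theorem msum_singleton (a : Ω) : msum {a} = a := by
  simp [msum]

@[simp] theorem msum_add (C D : Multiset Ω) : msum (C + D) = msum C + msum D := by
  simp [msum]

theorem IsTwoNormal.sum_msum [Fintype ι] (hΩ : IsTwoNormal Ω d) (C : Multiset Ω) :
    ∑ i, msum C i = card C * d := by
  induction C using Multiset.induction with
  | empty => simp
  | cons a C ih =>
    simp only [msum_cons, Pi.add_apply, Finset.sum_add_distrib, ih, hΩ.sum_eq, card_cons]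
    ring

theorem IsTwoNormal.card_eq_of_msum_eq [Fintype ι] (hΩ : IsTwoNormal Ω d) (hd : 0 < d)
    {C C' : Multiset Ω} (h : msum C = msum C') : card C = card C' := by
  have := hΩ.sum_msum C
  rw [h, hΩ.sum_msum C'] at this
  exact (Nat.eq_of_mul_eq_mul_right hd this).symm

def Move (k : ℕ) (C C' : Multiset Ω) : Prop :=
  ∃ D E E' : Multiset Ω, C = E + D ∧ C' = E' + D ∧ card E ≤ k ∧ card E' = card E ∧
    msum E' = msum E

theorem move_of_card_le {C C' : Multiset Ω} (hC : card C ≤ k) (hcard : card C' = card C)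
    (hsum : msum C' = msum C) : Move k C C' :=
  ⟨0, C, C', (add_zero C).symm, (add_zero C').symm, hC, hcard, hsum⟩

theorem Move.add_left {C C' : Multiset Ω} (h : Move k C C') (D : Multiset Ω) :
    Move k (D + C) (D + C') := by
  obtain ⟨D', E, E', rfl, rfl, hk, hcard, hsum⟩ := h
  exact ⟨D + D', E, E', by abel, by abel, hk, hcard, hsum⟩

theorem move_cons_cons_cons {x y z p q r : Ω} (h : (x + y + z : ι → ℕ) = p + q + r)
    (D : Multiset Ω) : Move 3 (x ::ₘ y ::ₘ z ::ₘ D) (p ::ₘ q ::ₘ r ::ₘ D) := by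
  have := (move_of_card_le (C := {x, y, z}) (C' := {p, q, r}) (k := 3) (by simp) (by simp)
    (by simp [← add_assoc, h])).add_left D
  simpa [add_comm D, insert_eq_cons] using this

theorem Move.card_eq_of_reflTransGen {C C' : Multiset Ω} (h : ReflTransGen (Move k) C C') :
    card C = card C' := by
  induction h with
  | refl => rfl
  | tail _ hm ih =>
    obtain ⟨D, E, E', rfl, rfl, -, hcard, -⟩ := hm
    simp [ih, hcard]

theorem Move.msum_eq_of_reflTransGen {C C' : Multiset Ω} (h : ReflTransGen (Move k) C C') :
    msum C = msum C' := by
  induction h with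
  | refl => rfl
  | tail _ hm ih =>
    obtain ⟨D, E, E', rfl, rfl, -, -, hsum⟩ := hm
    simp [ih, hsum]

theorem Move.reflTransGen_cons {C C' : Multiset Ω} (h : ReflTransGen (Move k) C C') (a : Ω) :
    ReflTransGen (Move k) (a ::ₘ C) (a ::ₘ C') := by
  rw [← singleton_add, ← singleton_add]
  exact ReflTransGen.lift ({a} + ·) (fun _ _ (hm : Move k _ _) => hm.add_left {a}) _ _ h

end Moves

section Connectivity

variable {ι : Type*} [Fintype ι] {Ω : Set (ι → ℕ)} {d : ℕ}

open Multiset Relation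

theorem IsTwoNormal.exists_reflTransGen_le_add (hΩ : IsTwoNormal Ω d) {C : Multiset Ω}
    (hC : 2 ≤ card C) {t : ι → ℕ} (ht : t ≤ msum C) (htd : ∑ i, t i ≤ d) :
    ∃ q r D, ReflTransGen (Move 3) C (q ::ₘ r ::ₘ D) ∧ t ≤ q + r := by
  induction C using Multiset.induction generalizing t with
  | empty => simp at hC
  | cons x C ih =>
    by_cases hC1 : card C < 2
    · obtain ⟨y, rfl⟩ := card_eq_one.mp (show card C = 1 by simp at hC; omega)
      exact ⟨x, y, 0, .refl, by simpa using ht⟩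
    obtain ⟨q₁, q₂, D, hCD, hq⟩ := ih (by omega) (t := t ⊓ msum C) inf_le_right
      ((Finset.sum_le_sum fun i _ => inf_le_left).trans htd)
    -- the part of `t` not below `msum C` lies below `x`
    have htx : t ≤ x + q₁ + q₂ := fun i => by
      have := ht i
      have := hq i
      simp only [msum_cons, Pi.add_apply, Pi.inf_apply] at *
      omega
    obtain ⟨p, q, r, hpqr, htqr⟩ := hΩ.exists_add_add_eq_of_le x q₁ q₂ htx htd
    refine ⟨q, r, p ::ₘ D, (Move.reflTransGen_cons hCD x).tail ?_, htqr⟩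
    rw [cons_swap r p, cons_swap q p]
    exact move_cons_cons_cons hpqr D

theorem IsTwoNormal.exists_reflTransGen_cons (hΩ : IsTwoNormal Ω d) {C : Multiset Ω}
    (hC : 3 ≤ card C) {b : Ω} (hb : (b : ι → ℕ) ≤ msum C) :
    ∃ D, ReflTransGen (Move 3) C (b ::ₘ D) := by
  obtain ⟨q₁, q₂, D, hCD, hbq⟩ := hΩ.exists_reflTransGen_le_add (by omega) hb (hΩ.sum_eq b).le
  have hD : 0 < card D := by
    have := Move.card_eq_of_reflTransGen hCD
    simp at this
    omega
  obtain ⟨z, hz⟩ := card_pos_iff_exists_mem.mp hD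
  obtain ⟨D, rfl⟩ := exists_cons_of_mem hz
  obtain ⟨q, r, hqr⟩ := hΩ.exists_add_add_eq q₁ q₂ z b (hbq.trans le_self_add)
  exact ⟨q ::ₘ r ::ₘ D, hCD.tail (move_cons_cons_cons hqr D)⟩

theorem IsTwoNormal.reflTransGen_move_of_msum_eq (hΩ : IsTwoNormal Ω d) {C C' : Multiset Ω}
    (hcard : card C = card C') (hsum : msum C = msum C') : ReflTransGen (Move 3) C C' := by
  induction C' using Multiset.induction generalizing C with
  | empty => exact .single (move_of_card_le (by simp [hcard]) (by simp [hcard]) hsum.symm)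
  | cons b C' ih =>
    by_cases h3 : card C ≤ 3
    · exact .single (move_of_card_le h3 hcard.symm hsum.symm)
    obtain ⟨D, hCD⟩ := hΩ.exists_reflTransGen_cons (C := C) (b := b) (by omega)
      (by simp [hsum])
    have hD := Move.msum_eq_of_reflTransGen hCD
    have hcD := Move.card_eq_of_reflTransGen hCD
    refine hCD.trans (Move.reflTransGen_cons (ih (C := D) (by simp at hcD hcard; omega) ?_) b)
    simp only [msum_cons, hsum] at hD
    exact (add_left_cancel hD).symm

end Connectivity

section MonomialMaps

variable {σ τ K : Type*} [CommRing K]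

theorem ker_le_of_monomial_sub_monomial_mem (f : (σ →₀ ℕ) → (τ →₀ ℕ))
    (φ : MvPolynomial σ K →ₗ[K] MvPolynomial τ K)
    (hφ : ∀ α c, φ (monomial α c) = monomial (f α) c) (I : Submodule K (MvPolynomial σ K))
    (hI : ∀ α β, f α = f β → monomial α 1 - monomial β 1 ∈ I) : LinearMap.ker φ ≤ I := by
  let ψ := (basisMonomials τ K).constr K fun γ => (monomial (f.invFun γ) 1 : MvPolynomial σ K)
  have hψ (γ : τ →₀ ℕ) (c : K) : ψ (monomial γ c) = monomial (f.invFun γ) c := by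
    have : ψ (monomial γ 1) = monomial (f.invFun γ) 1 := by
      simpa [ψ] using (basisMonomials τ K).constr_basis K _ γ
    rw [← mul_one c, ← smul_eq_mul, ← smul_monomial, map_smul, this, smul_monomial]
  -- `ψ` sends each monomial to a fixed representative of its fibre under `f`.
  have hrep (p : MvPolynomial σ K) : p - ψ (φ p) ∈ I := by
    induction p using MvPolynomial.induction_on' with
    | monomial α c =>
      rw [hφ, hψ, ← mul_one c, ← smul_eq_mul, ← smul_monomial, ← smul_monomial, ← smul_sub]
      exact I.smul_mem c (hI _ _ (Function.invFun_eq ⟨α, rfl⟩).symm)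
    | add p q hp hq => simpa [add_sub_add_comm] using I.add_mem hp hq
  intro p hp
  simpa [LinearMap.mem_ker.mp hp] using hrep p

theorem prod_X_pow_eq_monomial_equivFunOnFinite [Fintype σ] (v : σ → ℕ) :
    ∏ i, (X i : MvPolynomial σ K) ^ v i = monomial (Finsupp.equivFunOnFinite.symm v) 1 := by
  rw [monomial_eq, C_1, one_mul, Finsupp.prod_fintype _ _ fun _ => pow_zero _]
  rfl

end MonomialMaps

section Toric

open Multiset Relation

theorem isHomogeneous_monomial_toFinsupp {σ R : Type*} [CommSemiring R] [DecidableEq σ]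
    (C : Multiset σ) (c : R) : (monomial (toFinsupp C) c).IsHomogeneous (card C) :=
  isHomogeneous_monomial c (toFinsupp_sum_eq C)

variable {K : Type*} [Field K] {n : ℕ} {Ω : Set (Fin (n + 1) → ℕ)}

variable (K Ω) in
noncomputable def toricMap : MvPolynomial Ω K →ₐ[K] MvPolynomial (Fin (n + 1)) K :=
  aeval fun a : Ω => ∏ i, (X i : MvPolynomial (Fin (n + 1)) K) ^ (a.1 i)

theorem mem_toricIdeal {p : MvPolynomial Ω K} : p ∈ toricIdeal K Ω ↔ toricMap K Ω p = 0 :=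
  RingHom.mem_ker

theorem toricMap_monomial_toFinsupp (C : Multiset Ω) (c : K) :
    toricMap K Ω (monomial (toFinsupp C) c) =
      monomial (Finsupp.equivFunOnFinite.symm (msum C)) c := by
  induction C using Multiset.induction generalizing c with
  | empty =>
    have : Finsupp.equivFunOnFinite.symm (0 : Fin (n + 1) → ℕ) = 0 := Finsupp.ext fun _ => rfl
    simp [this, toricMap, toFinsupp_zero, monomial_zero', algebraMap_eq]
  | cons a C ih =>
    rw [← singleton_add, toFinsupp_add, toFinsupp_singleton, monomial_single_add, pow_one,
      map_mul, ih, toricMap, aeval_X, prod_X_pow_eq_monomial_equivFunOnFinite, monomial_mul,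
      one_mul]
    congr 2
    ext i
    simp

theorem monomial_sub_monomial_mem_span_of_reflTransGen {k : ℕ} {C C' : Multiset Ω}
    (h : ReflTransGen (Move k) C C') :
    monomial (toFinsupp C) (1 : K) - monomial (toFinsupp C') 1 ∈
      Ideal.span {p | p ∈ toricIdeal K Ω ∧ ∃ m ≤ k, p.IsHomogeneous m} := by
  induction h with
  | refl => simp
  | @tail C₁ C₂ _ hm ih =>
    obtain ⟨D, E, E', rfl, rfl, hk, hcard, hsum⟩ := hm
    rw [← sub_add_sub_cancel _ (monomial (toFinsupp (E + D)) 1)]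
    refine Ideal.add_mem _ ih ?_
    rw [toFinsupp_add, toFinsupp_add, ← mul_one (1 : K), ← monomial_mul, ← monomial_mul, ← sub_mul]
    refine Ideal.mul_mem_right _ _ (Ideal.subset_span ⟨?_, card E, hk, ?_⟩)
    · rw [mem_toricIdeal, map_sub, toricMap_monomial_toFinsupp, toricMap_monomial_toFinsupp, hsum,
        sub_self]
    · exact (isHomogeneous_monomial_toFinsupp E 1).sub
        (hcard ▸ isHomogeneous_monomial_toFinsupp E' 1)

end Toric

theorem stmt5_general (K : Type*) [Field K] (n d : ℕ) (hd : 1 ≤ d)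
    (Ω : Set (Fin (n + 1) → ℕ)) (hΩsub : Ω ⊆ {a | ∑ i, a i = d})
    (h2 : ∀ a : Fin (n + 1) → ℕ, ∑ i, a i = 2 * d → ∃ b ∈ Ω, ∃ c ∈ Ω, a = b + c) :
    genInDegLE K Ω 3 := by
  have hΩ : IsTwoNormal Ω d := ⟨hΩsub, h2⟩
  refine le_antisymm (fun p hp => ?_) (Ideal.span_le.2 fun p hp => hp.1)
  refine ker_le_of_monomial_sub_monomial_mem
    (fun α => Finsupp.equivFunOnFinite.symm (msum (Finsupp.toMultiset α)))
    (toricMap K Ω).toLinearMap (fun α c => ?_) ((Ideal.span _).restrictScalars K) (fun α β h => ?_)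
    (mem_toricIdeal.mp hp)
  · simpa using toricMap_monomial_toFinsupp (Finsupp.toMultiset α) c
  · have hsum := Finsupp.equivFunOnFinite.symm.injective h
    simpa using monomial_sub_monomial_mem_span_of_reflTransGen (K := K)
      (hΩ.reflTransGen_move_of_msum_eq (hΩ.card_eq_of_msum_eq hd hsum) hsum)

/-- if `Ω ⊆ M_{n,d}` spans a 2-normal space, then the toric ideal `I(Ω)` is
generated in degrees at most 3. -/
theorem stmt5 (K : Type*) [Field K] (n d : ℕ) (hn : 1 ≤ n) (hd : 1 ≤ d)
    (Ω : Set (Fin (n + 1) → ℕ)) (hΩsub : Ω ⊆ {a | ∑ i, a i = d})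
    (h2 : ∀ a : Fin (n + 1) → ℕ, ∑ i, a i = 2 * d → ∃ b ∈ Ω, ∃ c ∈ Ω, a = b + c) :
    genInDegLE K Ω 3 :=
  stmt5_general K n d hd Ω hΩsub h2
end

section
/- Let d ≥ 2 and let ρ : Fin (n+1) → ℕ be weights with ρ 0 = 0, ρ l < d for all l, and gcd(ρ 1, …, ρ n, d) = 1 (so that the cyclic group ⟨diag(e^{ρ 0},…,e^{ρ n})⟩ has order d), and let Ω = Ω(d, ρ). Suppose there are indices i, j, k with ρ i < ρ j < ρ k such that, setting α₁ = ρ j − ρ i, α₂ = ρ k − ρ i, g = gcd(α₁, d), d' = d/g, α₁' = α₁/g, and λ the unique integer with 0 < λ ≤ d' and d' ∣ (α₂ − λ·α₁'), one has g · gcd(λ, d') · gcd(λ − g, d') = 1. Then the toric ideal I(Ω) is NOT generated by quadrics, i.e. I(Ω) is strictly larger than the ideal generated by its homogeneous elements of degree 2. -/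
open MvPolynomial

/-!
The gcd hypothesis forces `g = 1` and makes `λ` and `λ - 1` units modulo `d`. Let
`C = {d e_i, d e_j, d e_k}`. Since `ρ j - ρ i`, `ρ k - ρ i ≡ λ (ρ j - ρ i)` and
`ρ k - ρ j ≡ (λ - 1) (ρ j - ρ i)` are prime to `d`, a sum of two elements of `C` is a sum of two
elements of `Ω` in only the obvious way. Hence every quadric of the toric ideal has zero
coefficient on the monomials `w_a w_b` with `a, b ∈ C`, so it vanishes at the point which is `1`
on the variables indexed by `C` and `0` elsewhere. If `y₁ + y₂ + y₃ = d (e_i + e_j + e_k)` with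
`y₁ ∉ C`, the cubic `w_{d e_i} w_{d e_j} w_{d e_k} - w_{y₁} w_{y₂} w_{y₃}` lies in the toric ideal
but does not vanish at that point, so it is not in the ideal generated by the quadrics. Such
`y₁, y₂, y₃` exist by a pigeonhole argument on the residues of `λ t` modulo `d`.
-/

namespace Finsupp

lemma exists_eq_single_add_single_of_degree_eq_two {α : Type*} {m : α →₀ ℕ} (h : m.degree = 2) :
    ∃ a b, m = single a 1 + single b 1 := by
  classical
  obtain ⟨a, b, hab⟩ := Multiset.card_eq_two.mp (m.card_toMultiset.trans h)
  refine ⟨a, b, ?_⟩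
  rw [← m.toMultiset_toFinsupp, hab, Multiset.insert_eq_cons, ← Multiset.singleton_add,
    Multiset.toFinsupp_add, Multiset.toFinsupp_singleton, Multiset.toFinsupp_singleton]

end Finsupp

namespace MvPolynomial

lemma monomial_single_add_single {σ R : Type*} [CommSemiring R] (a b : σ) (r : R) :
    monomial (Finsupp.single a 1 + Finsupp.single b 1) r = C r * X a * X b := by
  rw [monomial_add_single, pow_one, ← C_mul_X_eq_monomial]

end MvPolynomial

def UniquePairSums {σ : Type*} (Ω S : Set (σ → ℕ)) : Prop :=
  ∀ a ∈ S, ∀ b ∈ S, ∀ a' ∈ Ω, ∀ b' ∈ Ω, a' + b' = a + b → (a' = a ∧ b' = b) ∨ (a' = b ∧ b' = a)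

section Toric

variable {K : Type*} [Field K] {n : ℕ} {Ω : Set (Fin (n + 1) → ℕ)}

noncomputable def toricExponent (m : Ω →₀ ℕ) : Fin (n + 1) →₀ ℕ :=
  Finsupp.linearCombination ℕ (fun a : Ω => Finsupp.equivFunOnFinite.symm a.1) m

lemma toricExponent_single_add_single (a b : Ω) :
    toricExponent (Finsupp.single a 1 + Finsupp.single b 1) =
      Finsupp.equivFunOnFinite.symm (a.1 + b.1) := by
  ext; simp [toricExponent]

lemma aeval_monomial_eq_monomial_toricExponent (m : Ω →₀ ℕ) (r : K) :
    aeval (fun a : Ω => ∏ i, (X i : MvPolynomial (Fin (n + 1)) K) ^ a.1 i) (monomial m r) =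
      monomial (toricExponent m) r := by
  have hX (a : Ω) : ∏ i, (X i : MvPolynomial (Fin (n + 1)) K) ^ a.1 i =
      monomial (Finsupp.equivFunOnFinite.symm a.1) 1 := by
    rw [monomial_eq, C_1, one_mul, Finsupp.prod_fintype _ _ fun _ => pow_zero _]
    rfl
  simp only [aeval_monomial, hX, monomial_pow, one_pow, toricExponent,
    Finsupp.linearCombination_apply, monomial_finsupp_sum_index, algebraMap_eq]

lemma coeff_eq_zero_of_mem_toricIdeal {q : MvPolynomial Ω K} (hq : q ∈ toricIdeal K Ω)
    {m : Ω →₀ ℕ} (hm : ∀ m' ∈ q.support, toricExponent m' = toricExponent m → m' = m) :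
    coeff m q = 0 := by
  rw [toricIdeal, RingHom.mem_ker, q.as_sum, map_sum] at hq
  have := congrArg (coeff (toricExponent m)) hq
  simp only [aeval_monomial_eq_monomial_toricExponent, coeff_sum, coeff_monomial, coeff_zero]
    at this
  rwa [Finset.sum_eq_single m (fun m' hm' hne => if_neg fun h => hne (hm m' hm' h))
    (fun hnot => by rw [if_pos rfl, notMem_support_iff.mp hnot]), if_pos rfl] at this

variable {S : Set (Fin (n + 1) → ℕ)}

lemma eval_indicator_eq_zero_of_isHomogeneous_two (hS : UniquePairSums Ω S)
    {q : MvPolynomial Ω K} (hq : q ∈ toricIdeal K Ω) (h2 : q.IsHomogeneous 2) :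
    eval ((Subtype.val ⁻¹' S).indicator 1) q = 0 := by
  have hdeg {m : Ω →₀ ℕ} (hm : m ∈ q.support) :
      ∃ a b, m = Finsupp.single a 1 + Finsupp.single b 1 :=
    Finsupp.exists_eq_single_add_single_of_degree_eq_two <| by
      rw [Finsupp.degree_eq_weight_one]; exact h2 (mem_support_iff.mp hm)
  rw [q.as_sum, map_sum]
  refine Finset.sum_eq_zero fun m hm => ?_
  obtain ⟨a, b, rfl⟩ := hdeg hm
  rw [monomial_single_add_single]
  by_cases hab : a.1 ∈ S ∧ b.1 ∈ S
  · suffices coeff (Finsupp.single a 1 + Finsupp.single b 1) q = 0 by simp [this]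
    refine coeff_eq_zero_of_mem_toricIdeal hq fun m' hm' hexp => ?_
    obtain ⟨a', b', rfl⟩ := hdeg hm'
    simp only [toricExponent_single_add_single, EmbeddingLike.apply_eq_iff_eq] at hexp
    rcases hS a.1 hab.1 b.1 hab.2 a'.1 a'.2 b'.1 b'.2 hexp with ⟨ha, hb⟩ | ⟨ha, hb⟩
    · rw [Subtype.ext ha, Subtype.ext hb]
    · rw [Subtype.ext ha, Subtype.ext hb]; exact add_comm _ _
  · rw [not_and_or] at hab
    rcases hab with h | h <;> simp [Set.indicator_of_notMem (show _ ∉ Subtype.val ⁻¹' S from h)]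

lemma X_mul_X_mul_X_sub_mem_toricIdeal {x₁ x₂ x₃ y₁ y₂ y₃ : Ω}
    (h : x₁.1 + x₂.1 + x₃.1 = y₁.1 + y₂.1 + y₃.1) :
    X x₁ * X x₂ * X x₃ - X y₁ * X y₂ * X y₃ ∈ toricIdeal K Ω := by
  simp only [toricIdeal, RingHom.mem_ker, map_sub, map_mul, aeval_X, sub_eq_zero,
    ← Finset.prod_mul_distrib, ← pow_add]
  exact Finset.prod_congr rfl fun l _ => by rw [← Pi.add_apply, ← Pi.add_apply, h]; rfl

theorem not_genByQuadrics_of_uniquePairSums (hS : UniquePairSums Ω S) {x₁ x₂ x₃ y₁ y₂ y₃ : Ω}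
    (h : x₁.1 + x₂.1 + x₃.1 = y₁.1 + y₂.1 + y₃.1)
    (hx₁ : x₁.1 ∈ S) (hx₂ : x₂.1 ∈ S) (hx₃ : x₃.1 ∈ S) (hy₁ : y₁.1 ∉ S) :
    ¬ genByQuadrics K Ω := by
  intro hgen
  have hker : toricIdeal K Ω ≤ RingHom.ker (eval ((Subtype.val ⁻¹' S).indicator (1 : Ω → K))) := by
    rw [hgen, Ideal.span_le]
    exact fun q hq => eval_indicator_eq_zero_of_isHomogeneous_two hS hq.1 hq.2
  have := hker (X_mul_X_mul_X_sub_mem_toricIdeal h)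
  simp [Set.indicator_of_mem, Set.indicator_of_notMem, hx₁, hx₂, hx₃, hy₁] at this

end Toric

section InvariantExponents

variable {σ : Type*} [Fintype σ] [DecidableEq σ] {d : ℕ} {ρ : σ → ℕ}

def invariantExponents (d : ℕ) (ρ : σ → ℕ) : Set (σ → ℕ) :=
  {a | (∑ l, a l = d) ∧ d ∣ ∑ l, ρ l * a l}

lemma single_add_single_add_single_mem_invariantExponents {i j k : σ} {a b c : ℕ}
    (h : a + b + c = d) (hρ : d ∣ ρ i * a + ρ j * b + ρ k * c) :
    Pi.single i a + Pi.single j b + Pi.single k c ∈ invariantExponents d ρ := by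
  refine ⟨?_, ?_⟩
  · simpa [Finset.sum_add_distrib] using h
  · simpa [Finset.sum_add_distrib, mul_add, Pi.single_apply] using hρ

lemma single_mem_invariantExponents (x : σ) : Pi.single x d ∈ invariantExponents d ρ :=
  ⟨by simp, by simp [Pi.single_apply]⟩

lemma single_add_single_add_single_mem_invariantExponents_of_dvd {i j k : σ} {lam : ℤ}
    (hk : (d : ℤ) ∣ (ρ k - ρ i) - lam * (ρ j - ρ i)) {t u : ℕ} (htu : t + u ≤ d)
    (hdvd : (d : ℤ) ∣ lam * t + u) :
    Pi.single i (d - t - u) + Pi.single j u + Pi.single k t ∈ invariantExponents d ρ := by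
  refine single_add_single_add_single_mem_invariantExponents (by omega) ?_
  obtain ⟨c, hc⟩ := hk
  have e : ((ρ i * (d - t - u) + ρ j * u + ρ k * t : ℕ) : ℤ) =
      ρ i * d + (ρ j - ρ i) * (lam * t + u) + d * c * t := by
    push_cast [show ((d - t - u : ℕ) : ℤ) = d - t - u by omega]
    linear_combination (t : ℤ) * hc
  exact Int.natCast_dvd_natCast.mp (e ▸ dvd_add (dvd_add (dvd_mul_left _ _) (hdvd.mul_left _))
    ((dvd_mul_right _ _).mul_right _))

lemma eq_single_or_eq_single_of_mem_invariantExponents {v : σ → ℕ} {x y : σ}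
    (hv : v ∈ invariantExponents d ρ) (hsupp : ∀ l, l ≠ x → l ≠ y → v l = 0)
    (hxy : x ≠ y → IsCoprime ((ρ y : ℤ) - ρ x) d) :
    v = Pi.single x d ∨ v = Pi.single y d := by
  obtain ⟨hsum, hρ⟩ := hv
  by_cases hxy' : x = y
  · subst hxy'
    have hv : v = Pi.single x (v x) := funext fun l => by
      by_cases hl : l = x
      · subst hl; simp
      · simp [hl, hsupp l hl hl]
    rw [hv] at hsum ⊢
    simp only [Finset.sum_pi_single', Finset.mem_univ, if_true] at hsum
    simp [hsum]
  have hv : v = Pi.single x (v x) + Pi.single y (v y) := funext fun l => by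
    by_cases hlx : l = x
    · subst hlx; simp [hxy']
    · by_cases hly : l = y
      · subst hly; simp [hlx]
      · simp [hlx, hly, hsupp l hlx hly]
  rw [hv] at hsum hρ
  simp only [Pi.add_apply, Finset.sum_add_distrib, mul_add, Pi.single_apply, mul_ite, mul_zero,
    Finset.sum_ite_eq', Finset.mem_univ, if_true] at hsum hρ
  have hdvd : (d : ℤ) ∣ ((ρ y : ℤ) - ρ x) * v y := by
    have : ((ρ y : ℤ) - ρ x) * v y = ((ρ x * v x + ρ y * v y : ℕ) : ℤ) - ρ x * d := by
      push_cast [← hsum]; ring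
    rw [this]
    exact dvd_sub (Int.natCast_dvd_natCast.mpr hρ) (dvd_mul_left _ _)
  have hvy : d ∣ v y := Int.natCast_dvd_natCast.mp ((hxy hxy').symm.dvd_of_dvd_mul_left hdvd)
  rcases Nat.eq_zero_or_pos (v y) with h0 | hpos
  · left
    rw [hv, h0, show v x = d by omega]
    simp
  · right
    have := Nat.le_of_dvd hpos hvy
    rw [hv, show v y = d by omega, show v x = 0 by omega]
    simp

lemma uniquePairSums_invariantExponents {s : Set σ}
    (hs : s.Pairwise fun x y => IsCoprime ((ρ y : ℤ) - ρ x) d) :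
    UniquePairSums (invariantExponents d ρ) ((fun x => Pi.single x d) '' s) := by
  rintro _ ⟨x, hx, rfl⟩ _ ⟨y, hy, rfl⟩ v hv w hw hvw
  have hsupp (l : σ) (hlx : l ≠ x) (hly : l ≠ y) : v l = 0 := by
    have := congrFun hvw l
    simp only [Pi.add_apply, Pi.single_eq_of_ne hlx, Pi.single_eq_of_ne hly] at this
    omega
  rcases eq_single_or_eq_single_of_mem_invariantExponents hv hsupp (hs hx hy) with rfl | rfl
  · exact Or.inl ⟨rfl, add_left_cancel hvw⟩
  · exact Or.inr ⟨rfl, add_left_cancel (hvw.trans (add_comm _ _))⟩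

end InvariantExponents

section LatticePoints

variable {m lam : ℤ}

lemma Int.not_dvd_of_isCoprime (hm : 2 ≤ m) {a : ℤ} (ha : IsCoprime a m) : ¬ m ∣ a := fun h => by
  rcases Int.isUnit_iff.mp (ha.symm.isUnit_of_dvd h) with h1 | h1 <;> omega

lemma IsCoprime.of_dvd_sub_mul {a b : ℤ} (ha : IsCoprime a m) (hlam : IsCoprime lam m)
    (h : m ∣ b - lam * a) : IsCoprime b m := by
  obtain ⟨c, hc⟩ := h
  rw [show b = lam * a + m * c by linarith]
  exact (hlam.mul_left ha).add_mul_left_left c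

lemma exists_mul_sub_one_dvd (hm : 2 ≤ m) (hlam : IsCoprime lam m)
    (hlam1 : IsCoprime (lam - 1) m) : ∃ ν, 0 < ν ∧ ν + 2 ≤ m ∧ m ∣ (lam - 1) * ν - 1 := by
  obtain ⟨a, b, hab⟩ := hlam1
  have hν : m ∣ (lam - 1) * (a % m) - 1 :=
    ⟨-b - (lam - 1) * (a / m), by rw [Int.emod_def]; linear_combination hab⟩
  have hne0 : a % m ≠ 0 := fun h =>
    Int.not_dvd_of_isCoprime hm isCoprime_one_left.neg_left (by simpa [h] using hν)
  have hne : a % m ≠ m - 1 := fun h => Int.not_dvd_of_isCoprime hm hlam <| by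
    have := dvd_sub (dvd_mul_left m (lam - 1)) hν
    rwa [h, show (lam - 1) * m - ((lam - 1) * (m - 1) - 1) = lam by ring] at this
  have := Int.emod_nonneg a (show m ≠ 0 by omega)
  have := Int.emod_lt_of_pos a (show 0 < m by omega)
  exact ⟨a % m, by omega, by omega, hν⟩

lemma exists_mul_add_dvd (hlam : IsCoprime lam m) {ν : ℤ} (hν0 : 0 < ν) (hνm : ν + 2 ≤ m)
    (hν : m ∣ (lam - 1) * ν - 1) : ∃ t u, 0 < t ∧ t + ν < m ∧ 0 < u ∧ u ≤ ν ∧ m ∣ lam * t + u := by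
  by_contra! H
  have hcancel {t : ℤ} : m ∣ lam * t → m ∣ t := hlam.symm.dvd_of_dvd_mul_left
  have hmod (t : ℤ) : m ∣ lam * t - lam * t % m := ⟨lam * t / m, by rw [Int.emod_def]; ring⟩
  set I := Finset.Icc 1 (m - 1 - ν)
  have hmaps : ∀ t ∈ I, lam * t % m ∈ I := by
    intro t ht
    rw [Finset.mem_Icc] at ht ⊢
    have := Int.emod_nonneg (lam * t) (show m ≠ 0 by omega)
    have := Int.emod_lt_of_pos (lam * t) (show 0 < m by omega)
    have hne : lam * t % m ≠ 0 := fun h => by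
      have := Int.le_of_dvd (by omega) (hcancel (Int.dvd_of_emod_eq_zero h))
      omega
    refine ⟨by omega, not_lt.mp fun hgt => H t (m - lam * t % m) (by omega) (by omega)
      (by omega) (by omega) ?_⟩
    simpa [sub_add_eq_add_sub, add_sub_assoc] using dvd_add (hmod t) (dvd_refl m)
  have hinj : ∀ t₁ ∈ I, ∀ t₂ ∈ I, lam * t₁ % m = lam * t₂ % m → t₁ = t₂ := by
    intro t₁ h₁ t₂ h₂ h
    rw [Finset.mem_Icc] at h₁ h₂
    have : m ∣ t₁ - t₂ := hcancel (by rw [mul_sub]; exact Int.ModEq.dvd h.symm)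
    have := Int.eq_zero_of_abs_lt_dvd this (by rw [abs_lt]; omega)
    omega
  obtain ⟨t, ht, hteq⟩ := Finset.surj_on_of_inj_on_of_card_le (fun t _ => lam * t % m) hmaps
    (fun a b ha hb => hinj a ha b hb) le_rfl (m - 1 - ν) (by rw [Finset.mem_Icc]; omega)
  rw [Finset.mem_Icc] at ht
  -- `lam * t ≡ -(ν + 1) ≡ -lam * ν`, so `m ∣ t + ν`, which lies strictly between `0` and `m`
  have : m ∣ t + ν := hcancel <| by
    have := dvd_add (dvd_add (hmod t) hν) (dvd_refl m)
    rwa [← hteq, show lam * t - (m - 1 - ν) + ((lam - 1) * ν - 1) + m = lam * (t + ν) by ring]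
      at this
  have := Int.le_of_dvd (by omega) this
  omega

lemma exists_lattice_triple {d : ℕ} (hd : 2 ≤ d) (hlam : IsCoprime lam d)
    (hlam1 : IsCoprime (lam - 1) d) :
    ∃ t₁ u₁ t₂ u₂ t₃ u₃ : ℕ, t₁ + u₁ + 1 = d ∧ t₂ + u₂ ≤ d ∧ t₃ + u₃ ≤ d ∧
      t₁ + t₂ + t₃ = d ∧ u₁ + u₂ + u₃ = d ∧
      (d : ℤ) ∣ lam * t₁ + u₁ ∧ (d : ℤ) ∣ lam * t₂ + u₂ ∧ (d : ℤ) ∣ lam * t₃ + u₃ := by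
  obtain ⟨ν, hν0, hνd, hν⟩ := exists_mul_sub_one_dvd (by exact_mod_cast hd) hlam hlam1
  obtain ⟨t, u, ht0, htν, hu0, huν, htu⟩ := exists_mul_add_dvd hlam hν0 hνd hν
  lift ν to ℕ using hν0.le
  lift t to ℕ using ht0.le
  lift u to ℕ using hu0.le
  refine ⟨ν, d - 1 - ν, t, u, d - ν - t, ν + 1 - u, by omega, by omega, by omega, by omega,
    by omega, ?_, htu, ?_⟩
  · have e : ((d - 1 - ν : ℕ) : ℤ) = d - 1 - ν := by omega
    rw [e]
    exact (dvd_add hν (dvd_refl _)).trans (dvd_of_eq (by ring))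
  · have e₁ : ((d - ν - t : ℕ) : ℤ) = d - ν - t := by omega
    have e₂ : ((ν + 1 - u : ℕ) : ℤ) = ν + 1 - u := by omega
    rw [e₁, e₂]
    exact (dvd_sub (dvd_sub (dvd_mul_left _ lam) hν) htu).trans (dvd_of_eq (by ring))

end LatticePoints

theorem not_genByQuadrics_invariantExponents (K : Type*) [Field K] {n d : ℕ}
    {ρ : Fin (n + 1) → ℕ} {i j k : Fin (n + 1)} {lam : ℤ} (hd : 2 ≤ d)
    (hij : IsCoprime ((ρ j : ℤ) - ρ i) d) (hlam : IsCoprime lam d)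
    (hlam1 : IsCoprime (lam - 1) d) (hk : (d : ℤ) ∣ (ρ k - ρ i) - lam * (ρ j - ρ i)) :
    ¬ genByQuadrics K (invariantExponents d ρ) := by
  have hik : IsCoprime ((ρ k : ℤ) - ρ i) d := hij.of_dvd_sub_mul hlam hk
  have hjk : IsCoprime ((ρ k : ℤ) - ρ j) d :=
    hij.of_dvd_sub_mul hlam1 (hk.trans (dvd_of_eq (by ring)))
  have hne {x y : Fin (n + 1)} (h : IsCoprime ((ρ y : ℤ) - ρ x) d) : x ≠ y := by
    rintro rfl
    exact Int.not_dvd_of_isCoprime (by exact_mod_cast hd) h (by simp)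
  have hs : Set.Pairwise {i, j, k} fun x y => IsCoprime ((ρ y : ℤ) - ρ x) d := by
    have hsymm {x y : Fin (n + 1)} (h : IsCoprime ((ρ y : ℤ) - ρ x) d) :
        IsCoprime ((ρ x : ℤ) - ρ y) d := by simpa using h.neg_left
    simp only [Set.pairwise_insert, Set.pairwise_singleton, Set.mem_insert_iff,
      Set.mem_singleton_iff]
    aesop
  obtain ⟨t₁, u₁, t₂, u₂, t₃, u₃, h₁, h₂, h₃, ht, hu, hd₁, hd₂, hd₃⟩ :=
    exists_lattice_triple hd hlam hlam1
  have hmem {t u : ℕ} (htu : t + u ≤ d) (hdvd : (d : ℤ) ∣ lam * t + u) :=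
    single_add_single_add_single_mem_invariantExponents_of_dvd hk htu hdvd
  refine not_genByQuadrics_of_uniquePairSums (K := K) (uniquePairSums_invariantExponents hs)
    (x₁ := ⟨_, single_mem_invariantExponents i⟩) (x₂ := ⟨_, single_mem_invariantExponents j⟩)
    (x₃ := ⟨_, single_mem_invariantExponents k⟩) (y₁ := ⟨_, hmem (by omega) hd₁⟩)
    (y₂ := ⟨_, hmem h₂ hd₂⟩) (y₃ := ⟨_, hmem h₃ hd₃⟩) ?_ ⟨i, by simp, rfl⟩ ⟨j, by simp, rfl⟩
    ⟨k, by simp, rfl⟩ ?_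
  · funext l
    simp only [Pi.add_apply, Pi.single_apply]
    split_ifs <;> omega
  · -- `y₁` has `i`-coordinate `1`, while every corner has `i`-coordinate `0` or `d`
    rintro ⟨x, hx, hxy⟩
    have := congrFun hxy i
    rcases hx with rfl | rfl | rfl <;> simp [hne hij, hne hik] at this <;> omega

theorem stmt14_general (K : Type*) [Field K] (n d : ℕ) (hd : 2 ≤ d)
    (ρ : Fin (n + 1) → ℕ)
    (i j k : Fin (n + 1)) (hij : ρ i < ρ j) (hjk : ρ j < ρ k)
    (lam : ℕ)
    (hlamdvd : ((d / Nat.gcd (ρ j - ρ i) d : ℕ) : ℤ) ∣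
        (((ρ k - ρ i : ℕ) : ℤ) -
          (lam : ℤ) * (((ρ j - ρ i) / Nat.gcd (ρ j - ρ i) d : ℕ) : ℤ)))
    (heq : Nat.gcd (ρ j - ρ i) d *
        Int.gcd (lam : ℤ) ((d / Nat.gcd (ρ j - ρ i) d : ℕ) : ℤ) *
        Int.gcd ((lam : ℤ) - ((Nat.gcd (ρ j - ρ i) d : ℕ) : ℤ))
          ((d / Nat.gcd (ρ j - ρ i) d : ℕ) : ℤ) = 1) :
    ¬ genByQuadrics K {a : Fin (n + 1) → ℕ | (∑ l, a l = d) ∧ d ∣ ∑ l, ρ l * a l} := by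
  obtain ⟨⟨hg, hlam⟩, hlam1⟩ := (mul_eq_one.mp heq).imp_left mul_eq_one.mp
  rw [hg, Nat.div_one] at hlam hlam1 hlamdvd
  rw [Nat.div_one] at hlamdvd
  push_cast [Nat.cast_sub hij.le, Nat.cast_sub (hij.trans hjk).le] at hlamdvd hlam1
  refine not_genByQuadrics_invariantExponents K hd ?_ (Int.isCoprime_iff_gcd_eq_one.mpr hlam)
    (Int.isCoprime_iff_gcd_eq_one.mpr hlam1) hlamdvd
  simpa [Nat.cast_sub hij.le] using Nat.isCoprime_iff_coprime.mpr hg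

/-- for weights `ρ` with `ρ 0 = 0`, all `ρ l < d` and
`gcd(ρ 0, …, ρ n, d) = 1`, if there are indices `i, j, k` with `ρ i < ρ j < ρ k` such that
the gcd-condition for `α₁ = ρ j − ρ i`, `α₂ = ρ k − ρ i` attains its minimum value 1, then
the toric ideal of `Ω(d, ρ)` is not generated by quadrics. -/
theorem stmt14 (K : Type*) [Field K] (n d : ℕ) (hd : 2 ≤ d)
    (ρ : Fin (n + 1) → ℕ) (hρ0 : ρ 0 = 0) (hρd : ∀ l, ρ l < d)
    (hgcd : Nat.gcd (Finset.univ.gcd ρ) d = 1)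
    (i j k : Fin (n + 1)) (hij : ρ i < ρ j) (hjk : ρ j < ρ k)
    (lam : ℕ) (hlam0 : 0 < lam) (hlamle : lam ≤ d / Nat.gcd (ρ j - ρ i) d)
    (hlamdvd : ((d / Nat.gcd (ρ j - ρ i) d : ℕ) : ℤ) ∣
        (((ρ k - ρ i : ℕ) : ℤ) -
          (lam : ℤ) * (((ρ j - ρ i) / Nat.gcd (ρ j - ρ i) d : ℕ) : ℤ)))
    (heq : Nat.gcd (ρ j - ρ i) d *
        Int.gcd (lam : ℤ) ((d / Nat.gcd (ρ j - ρ i) d : ℕ) : ℤ) *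
        Int.gcd ((lam : ℤ) - ((Nat.gcd (ρ j - ρ i) d : ℕ) : ℤ))
          ((d / Nat.gcd (ρ j - ρ i) d : ℕ) : ℤ) = 1) :
    ¬ genByQuadrics K {a : Fin (n + 1) → ℕ | (∑ l, a l = d) ∧ d ∣ ∑ l, ρ l * a l} :=
  stmt14_general K n d hd ρ i j k hij hjk lam hlamdvd heq
end

section
/- Let k ≥ 2 and t ≥ 1 be integers and set d = t·k·(k−1). Then for natural numbers a, b, c with a + b + c = d, the divisibility d ∣ (b + k·c) holds if and only if either (a, b, c) = (d, 0, 0), or there exist integers r and c' with 1 ≤ r ≤ k, (r−1)·t·k ≤ c' ≤ r·t·(k−1), and a = (k−1)·c' − (r−1)·d, b = r·d − k·c', c = c'. (In particular, each monomial invariant x₀^a x₁^b x₂^c of degree d of the cyclic group ⟨diag(1, e, e^k)⟩ of order d is uniquely described by such a pair (r, c').) -/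
open MvPolynomial

/-!
Write `b + k c = r d`. Together with `a + b + c = d` this forces `a = (k - 1) c - (r - 1) d` and
`b = r d - k c`, and the bounds on `c` are exactly `a ≥ 0` and `b ≥ 0`; they in turn force
`r ≤ k`. The quotient `r = 0` gives the monomial `x₀^d`.
-/

theorem exponents_eq_of_add_mul_eq {R : Type*} [CommRing R] {a b c k d r : R}
    (habc : a + b + c = d) (h : b + k * c = r * d) :
    a = (k - 1) * c - (r - 1) * d ∧ b = r * d - k * c :=
  ⟨by linear_combination habc - h, by linear_combination h⟩

section
variable {R : Type*} [CommRing R] [LinearOrder R] [IsStrictOrderedRing R] {k t r c : R}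

theorem le_of_nonneg_sub_mul_sub_one (hk : 1 < k)
    (h : 0 ≤ (k - 1) * c - (r - 1) * (t * k * (k - 1))) : (r - 1) * t * k ≤ c := by
  refine le_of_mul_le_mul_left ?_ (sub_pos.2 hk)
  linear_combination h

theorem le_of_nonneg_mul_sub_mul (hk : 0 < k) (h : 0 ≤ r * (t * k * (k - 1)) - k * c) :
    c ≤ r * t * (k - 1) := by
  refine le_of_mul_le_mul_left ?_ hk
  linear_combination h

theorem le_of_sub_one_mul_le_mul_sub_one (ht : 0 < t) (hlo : (r - 1) * t * k ≤ c)
    (hhi : c ≤ r * t * (k - 1)) : r ≤ k := by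
  refine le_of_mul_le_mul_left ?_ ht
  linear_combination hlo + hhi

end

/-- for `k ≥ 2`, `t ≥ 1`, `d = t·k·(k−1)` and `a + b + c = d`, we have
`d ∣ (b + k·c)` iff `(a,b,c) = (d,0,0)` or `(a,b,c)` is determined by a pair `(r,c')` with
`1 ≤ r ≤ k`, `(r−1)·t·k ≤ c' ≤ r·t·(k−1)`, `a = (k−1)·c' − (r−1)·d`, `b = r·d − k·c'`,
`c = c'`. -/
theorem stmt16 (k t : ℕ) (hk : 2 ≤ k) (ht : 1 ≤ t) (a b c : ℕ)
    (habc : a + b + c = t * k * (k - 1)) :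
    (t * k * (k - 1)) ∣ (b + k * c) ↔
      ((a = t * k * (k - 1) ∧ b = 0 ∧ c = 0) ∨
        ∃ r c' : ℕ, 1 ≤ r ∧ r ≤ k ∧ (r - 1) * t * k ≤ c' ∧ c' ≤ r * t * (k - 1) ∧
          (a : ℤ) = ((k : ℤ) - 1) * c' - ((r : ℤ) - 1) * (t * k * ((k : ℤ) - 1)) ∧
          (b : ℤ) = (r : ℤ) * (t * k * ((k : ℤ) - 1)) - k * c' ∧
          c = c') := by
  have hk1 : 1 ≤ k := by omega
  constructor
  · rintro ⟨r, hr⟩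
    obtain rfl | hr1 := Nat.eq_zero_or_pos r
    · obtain ⟨rfl, hkc⟩ := Nat.add_eq_zero_iff.1 (hr.trans (mul_zero _))
      obtain rfl : c = 0 := (Nat.mul_eq_zero.1 hkc).resolve_left (by omega)
      exact Or.inl ⟨by simpa using habc, rfl, rfl⟩
    · have habcZ : (a : ℤ) + b + c = t * k * ((k : ℤ) - 1) := by exact_mod_cast habc
      have hrZ : (b : ℤ) + k * c = r * (t * k * ((k : ℤ) - 1)) := by
        rw [mul_comm (r : ℤ)]; exact_mod_cast hr
      obtain ⟨ha, hb⟩ := exponents_eq_of_add_mul_eq habcZ hrZ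
      have hlo := le_of_nonneg_sub_mul_sub_one (by exact_mod_cast hk) (ha ▸ a.cast_nonneg)
      have hhi := le_of_nonneg_mul_sub_mul (by positivity) (hb ▸ b.cast_nonneg)
      have hrk := le_of_sub_one_mul_le_mul_sub_one (by exact_mod_cast ht) hlo hhi
      refine Or.inr ⟨r, c, hr1, by exact_mod_cast hrk, ?_, ?_, ha, hb, rfl⟩
      · zify [hr1]; exact hlo
      · zify [hk1]; exact hhi
  · rintro (⟨-, rfl, rfl⟩ | ⟨r, c', -, -, -, -, -, hb, rfl⟩)
    · simp
    · refine Int.natCast_dvd_natCast.1 ⟨r, ?_⟩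
      push_cast [hk1]
      linear_combination hb
end

section
/- Let d ≥ 2, let α : Fin (n+1) → ℕ be weights with α l < d for all l, and suppose there are indices i ≠ j with α i ≢ α j (mod d). Let B₁ = Ω(d, α) = { a : Fin (n+1) → ℕ | ∑ l, a l = d ∧ d ∣ ∑ l, (α l)·(a l) }. Then for every t ≥ 1, the exponent vector v of degree t·d defined by v i = t·d − 1, v j = 1, and v l = 0 otherwise, is not a sum of t elements of B₁. In particular, the span of B₁ is not 2-normal: for every t ≥ 1 the degree-t graded component of K[B₁] is a proper subspace of the space of forms of degree t·d. -/
open MvPolynomial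

/-! Every element of `Ω(d, α)` has weighted degree `∑ l, α l * a l ≡ 0 (mod d)`, and weighted
degree is additive, so the same holds for every sum of such elements. The vector in question has
weighted degree `α i * (t * d - 1) + α j ≡ α j - α i (mod d)`, which is not `0` since
`α i ≢ α j (mod d)`. -/

open Finset

theorem dvd_sum_mul_sum_of_forall_dvd {ι σ : Type*} [Fintype ι] [Fintype σ] (α : ι → ℕ)
    (f : σ → ι → ℕ) {d : ℕ} (h : ∀ s, d ∣ ∑ l, α l * f s l) :
    d ∣ ∑ l, α l * (∑ s, f s) l := by
  change d ∣ α ⬝ᵥ ∑ s, f s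
  rw [dotProduct_sum]
  exact dvd_sum fun s _ => h s

theorem sum_mul_ite_ite_of_ne {ι R : Type*} [Fintype ι] [DecidableEq ι] [NonAssocSemiring R]
    (α : ι → R) {i j : ι} (hij : i ≠ j) (x y : R) :
    ∑ l, α l * (if l = i then x else if l = j then y else 0) = α i * x + α j * y := by
  rw [Fintype.sum_eq_add i j hij fun l hl => by simp [hl.1, hl.2]]
  simp [hij.symm]

theorem Nat.modEq_of_dvd_mul_sub_one_add {a b d m : ℕ} (hdm : d ∣ m) (hm : 0 < m)
    (h : d ∣ a * (m - 1) + b) : a ≡ b [MOD d] := by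
  have hsucc : a * (m - 1) + a = a * m := by
    rw [← Nat.mul_add_one, Nat.sub_add_cancel hm]
  have ha : d ∣ a * (m - 1) + a := hsucc ▸ dvd_mul_of_dvd_right hdm a
  exact Nat.ModEq.add_left_cancel' (a * (m - 1))
    ((Nat.modEq_zero_iff_dvd.mpr ha).trans (Nat.modEq_zero_iff_dvd.mpr h).symm)

theorem stmt17_general (n d : ℕ) (hd : 2 ≤ d)
    (α : Fin (n + 1) → ℕ)
    (i j : Fin (n + 1)) (hij : i ≠ j) (hmod : ¬ α i ≡ α j [MOD d]) :
    ∀ t : ℕ, 1 ≤ t →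
      ¬ ∃ f : Fin t → (Fin (n + 1) → ℕ),
          (∀ s, f s ∈ {a : Fin (n + 1) → ℕ | (∑ l, a l = d) ∧ d ∣ ∑ l, α l * a l}) ∧
          (fun l => if l = i then t * d - 1 else if l = j then 1 else 0) = ∑ s, f s := by
  rintro t ht ⟨f, hf, hv⟩
  have hweight := dvd_sum_mul_sum_of_forall_dvd α f fun s => (hf s).2
  rw [← hv, sum_mul_ite_ite_of_ne α hij, mul_one] at hweight
  have htd : 0 < t * d := Nat.mul_pos ht (by omega)
  exact hmod (Nat.modEq_of_dvd_mul_sub_one_add (dvd_mul_left d t) htd hweight)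

/-- for weights `α` with all `α l < d` and `α i ≢ α j (mod d)` for some
`i ≠ j`, the exponent vector with value `t·d − 1` at `i`, `1` at `j` and `0` elsewhere is
not a sum of `t` elements of `B₁ = Ω(d, α)`, for any `t ≥ 1` (so the span of `B₁` is never
2-normal). -/
theorem stmt17 (n d : ℕ) (hn : 1 ≤ n) (hd : 2 ≤ d)
    (α : Fin (n + 1) → ℕ) (hαd : ∀ l, α l < d)
    (i j : Fin (n + 1)) (hij : i ≠ j) (hmod : ¬ α i ≡ α j [MOD d]) :
    ∀ t : ℕ, 1 ≤ t →
      ¬ ∃ f : Fin t → (Fin (n + 1) → ℕ),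
          (∀ s, f s ∈ {a : Fin (n + 1) → ℕ | (∑ l, a l = d) ∧ d ∣ ∑ l, α l * a l}) ∧
          (fun l => if l = i then t * d - 1 else if l = j then 1 else 0) = ∑ s, f s :=
  stmt17_general n d hd α i j hij hmod
end
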